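/- Although r(s) → +∞ as s → T−, for every t ∈ [0,T) the interest rate r is integrable on (t,T) and the money market account value is finite and given in closed form by exp(∫_t^T r(s) ds) = β(t) · e^{(δ+σ²/2)(T−t)}. -/

import Mathlib

open MeasureTheory Real Set Filter

/-- Standard normal cdf `N(x)`. -/
noncomputable def stdCdf (x : ℝ) : ℝ := ∫ y in Set.Iic x, Real.exp (-y ^ 2 / 2) / Real.sqrt (2 * Real.pi)

/-- Standard normal pdf `n(x)`. -/
noncomputable def stdPdf (x : ℝ) : ℝ := Real.exp (-x ^ 2 / 2) / Real.sqrt (2 * Real.pi)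

/-- `β(t) = 1 + (2σ/√(2δ+σ²))·(N(√((2δ+σ²)(T−t))) − 1/2)`. -/
noncomputable def betaIR (T σ δ t : ℝ) : ℝ :=
  1 + 2 * σ / Real.sqrt (2 * δ + σ ^ 2) *
    (stdCdf (Real.sqrt ((2 * δ + σ ^ 2) * (T - t))) - 1 / 2)

/-- `γ(t) = σ·n(√((2δ+σ²)(T−t)))/(√(T−t)·β(t))`. -/
noncomputable def gammaIR (T σ δ t : ℝ) : ℝ :=
  σ * stdPdf (Real.sqrt ((2 * δ + σ ^ 2) * (T - t))) / (Real.sqrt (T - t) * betaIR T σ δ t)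

/-- Time-dependent interest rate `r(t) = γ(t) + δ + σ²/2`. -/
noncomputable def rateIR (T σ δ t : ℝ) : ℝ := gammaIR T σ δ t + δ + σ ^ 2 / 2

/-!
With `a = 2δ + σ²`, the chain rule and `N' = n` give `β'(s) = -σ n(√(a(T-s))) / √(T-s)`, so
`γ = -β'/β` and `r` is the derivative of `F(s) = (δ + σ²/2) s - log β(s)`. Since `N ≥ 1/2` on
`[0, ∞)` we have `β > 0`, so `F` is continuous on `[t, T]`, and since `r ≥ 0` the blow-up of `r`
at `T` does not prevent integrability. The fundamental theorem of calculus then gives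
`∫_t^T r = F(T) - F(t) = log β(t) + (δ + σ²/2)(T - t)`, using `β(T) = 1`.
-/

lemma stdPdf_nonneg (x : ℝ) : 0 ≤ stdPdf x := by
  unfold stdPdf; positivity

lemma continuous_stdPdf : Continuous stdPdf := by
  unfold stdPdf; fun_prop

lemma stdPdf_neg (x : ℝ) : stdPdf (-x) = stdPdf x := by
  simp only [stdPdf, even_two, Even.neg_pow]

lemma stdPdf_eq_gaussian (x : ℝ) :
    stdPdf x = Real.exp (-(1 / 2) * x ^ 2) / Real.sqrt (2 * Real.pi) := by
  rw [stdPdf, neg_div, neg_mul, one_div_mul_eq_div]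

lemma integrable_stdPdf : Integrable stdPdf := by
  simpa only [← stdPdf_eq_gaussian] using
    (integrable_exp_neg_mul_sq (by norm_num : (0 : ℝ) < 1 / 2)).div_const
      (Real.sqrt (2 * Real.pi))

lemma integral_stdPdf : ∫ y, stdPdf y = 1 := by
  simp only [stdPdf_eq_gaussian]
  rw [integral_div, integral_gaussian, show Real.pi / (1 / 2) = 2 * Real.pi by ring,
    div_self (by positivity)]

lemma stdCdf_zero : stdCdf 0 = 1 / 2 := by
  have hsymm : ∫ y in Iic (0 : ℝ), stdPdf y = ∫ y in Ioi (0 : ℝ), stdPdf y := by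
    simpa only [stdPdf_neg, neg_zero] using integral_comp_neg_Iic (0 : ℝ) stdPdf
  have hsplit : (∫ y in Iic (0 : ℝ), stdPdf y) + ∫ y in Ioi (0 : ℝ), stdPdf y = 1 := by
    rw [← setIntegral_union (Iic_disjoint_Ioi le_rfl) measurableSet_Ioi
      integrable_stdPdf.integrableOn integrable_stdPdf.integrableOn, Iic_union_Ioi,
      Measure.restrict_univ, integral_stdPdf]
  change ∫ y in Iic (0 : ℝ), stdPdf y = 1 / 2
  linarith

lemma stdCdf_eq_half_add_integral (x : ℝ) : stdCdf x = 1 / 2 + ∫ y in (0 : ℝ)..x, stdPdf y := by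
  rw [← intervalIntegral.integral_Iic_sub_Iic integrable_stdPdf.integrableOn
    integrable_stdPdf.integrableOn, ← stdCdf_zero]
  change stdCdf x = stdCdf 0 + (stdCdf x - stdCdf 0)
  ring

lemma hasDerivAt_stdCdf (x : ℝ) : HasDerivAt stdCdf (stdPdf x) x := by
  rw [funext stdCdf_eq_half_add_integral]
  exact (intervalIntegral.integral_hasDerivAt_right integrable_stdPdf.intervalIntegrable
    continuous_stdPdf.stronglyMeasurable.stronglyMeasurableAtFilter
    continuous_stdPdf.continuousAt).const_add _

lemma continuous_stdCdf : Continuous stdCdf :=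
  continuous_iff_continuousAt.mpr fun x => (hasDerivAt_stdCdf x).continuousAt

lemma half_le_stdCdf {x : ℝ} (hx : 0 ≤ x) : 1 / 2 ≤ stdCdf x := by
  rw [stdCdf_eq_half_add_integral]
  linarith [intervalIntegral.integral_nonneg (μ := volume) hx fun y _ => stdPdf_nonneg y]

section MoneyMarket

variable {T σ δ : ℝ}

lemma betaIR_pos (hσ : 0 ≤ σ) (s : ℝ) : 0 < betaIR T σ δ s := by
  have hN := half_le_stdCdf (Real.sqrt_nonneg ((2 * δ + σ ^ 2) * (T - s)))
  have hcoef : 0 ≤ 2 * σ / Real.sqrt (2 * δ + σ ^ 2) := by positivity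
  unfold betaIR
  nlinarith [mul_nonneg hcoef (sub_nonneg.mpr hN)]

lemma betaIR_self : betaIR T σ δ T = 1 := by
  rw [betaIR, sub_self, mul_zero, Real.sqrt_zero, stdCdf_zero, sub_self, mul_zero, add_zero]

lemma continuous_betaIR : Continuous (betaIR T σ δ) := by
  unfold betaIR
  exact continuous_const.add (continuous_const.mul ((continuous_stdCdf.comp
    (continuous_const.mul (continuous_const.sub continuous_id)).sqrt).sub continuous_const))

lemma hasDerivAt_betaIR (ha : 0 < 2 * δ + σ ^ 2) {s : ℝ} (hs : s < T) :
    HasDerivAt (betaIR T σ δ)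
      (-(σ * stdPdf (Real.sqrt ((2 * δ + σ ^ 2) * (T - s))) / Real.sqrt (T - s))) s := by
  set a := 2 * δ + σ ^ 2
  have hTs : 0 < T - s := sub_pos.mpr hs
  have hinner : HasDerivAt (fun u => Real.sqrt (a * (T - u)))
      (1 / (2 * Real.sqrt (a * (T - s))) * (a * (-1))) s :=
    (Real.hasDerivAt_sqrt (mul_pos ha hTs).ne').comp s
      (((hasDerivAt_id s).const_sub T).const_mul a)
  refine (((((hasDerivAt_stdCdf _).comp s hinner).sub_const (1 / 2)).const_mul
    (2 * σ / Real.sqrt a)).const_add 1).congr_deriv ?_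
  have hsa : Real.sqrt a ≠ 0 := (Real.sqrt_pos.mpr ha).ne'
  have hsTs : Real.sqrt (T - s) ≠ 0 := (Real.sqrt_pos.mpr hTs).ne'
  rw [Real.sqrt_mul ha.le]
  field_simp
  rw [sq_sqrt ha.le]
  ring

lemma hasDerivAt_log_betaIR (hσ : 0 ≤ σ) (ha : 0 < 2 * δ + σ ^ 2) {s : ℝ} (hs : s < T) :
    HasDerivAt (fun u => Real.log (betaIR T σ δ u)) (-gammaIR T σ δ s) s := by
  convert (hasDerivAt_betaIR ha hs).log (betaIR_pos hσ s).ne' using 1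
  rw [gammaIR, neg_div, div_div]

lemma hasDerivAt_rateIR_antideriv (hσ : 0 ≤ σ) (ha : 0 < 2 * δ + σ ^ 2) {s : ℝ} (hs : s < T) :
    HasDerivAt (fun u => (δ + σ ^ 2 / 2) * u - Real.log (betaIR T σ δ u)) (rateIR T σ δ s) s := by
  refine (((hasDerivAt_id s).const_mul (δ + σ ^ 2 / 2)).sub
    (hasDerivAt_log_betaIR hσ ha hs)).congr_deriv ?_
  rw [rateIR]
  ring

lemma rateIR_nonneg (hσ : 0 ≤ σ) (hδ : 0 ≤ δ) (s : ℝ) : 0 ≤ rateIR T σ δ s := by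
  have := betaIR_pos (T := T) (δ := δ) hσ s
  have := stdPdf_nonneg (Real.sqrt ((2 * δ + σ ^ 2) * (T - s)))
  unfold rateIR gammaIR
  positivity

end MoneyMarket

theorem rateIR_integrable_money_market_general (T σ δ : ℝ)
    (hσ : 0 < σ) (hδ : 0 ≤ δ)
    (t : ℝ) (htT : t < T) :
    IntegrableOn (rateIR T σ δ) (Set.Ioo t T) ∧
      Real.exp (∫ s in t..T, rateIR T σ δ s)
        = betaIR T σ δ t * Real.exp ((δ + σ ^ 2 / 2) * (T - t)) := by
  set F := fun u => (δ + σ ^ 2 / 2) * u - Real.log (betaIR T σ δ u)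
  have hderiv : ∀ s ∈ Ioo t T, HasDerivAt F (rateIR T σ δ s) s := fun s hs =>
    hasDerivAt_rateIR_antideriv hσ.le (by positivity) hs.2
  have hcont : ContinuousOn F (Icc t T) :=
    (continuous_const.mul continuous_id).continuousOn.sub
      (continuous_betaIR.continuousOn.log fun s _ => (betaIR_pos hσ.le s).ne')
  have hint : IntegrableOn (rateIR T σ δ) (Ioc t T) :=
    intervalIntegral.integrableOn_deriv_of_nonneg hcont hderiv
      fun s _ => rateIR_nonneg hσ.le hδ s
  refine ⟨hint.mono_set Ioo_subset_Ioc_self, ?_⟩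
  rw [intervalIntegral.integral_eq_sub_of_hasDerivAt_of_le htT.le hcont hderiv
      ((intervalIntegrable_iff_integrableOn_Ioc_of_le htT.le).mpr hint),
    show F T - F t = Real.log (betaIR T σ δ t) + (δ + σ ^ 2 / 2) * (T - t) by
      simp only [F, betaIR_self, Real.log_one]; ring,
    Real.exp_add, Real.exp_log (betaIR_pos hσ.le t)]

theorem rateIR_integrable_money_market (K T σ δ : ℝ)
    (hK : 0 < K) (hT : 0 < T) (hσ : 0 < σ) (hδ : 0 ≤ δ)
    (t : ℝ) (ht0 : 0 ≤ t) (htT : t < T) :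
    IntegrableOn (rateIR T σ δ) (Set.Ioo t T) ∧
      Real.exp (∫ s in t..T, rateIR T σ δ s)
        = betaIR T σ δ t * Real.exp ((δ + σ ^ 2 / 2) * (T - t)) :=
  rateIR_integrable_money_market_general T σ δ hσ hδ t htT
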